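/- Let n ≥ 1 and let P_n(1,u) and F₁(u) = Q_n(1,u) − u·P_n(1,u) be real polynomials, where P_n, Q_n are homogeneous of degree n. Suppose F₁ has n+1 distinct simple real roots û₁ < ... < û_{n+1}, and P_n(1,û_i) ≠ 0 for all i. Then it is impossible that P_n(1,û_i)·F₁'(û_i) > 0 for every i = 1, …, n+1 (i.e., not all n+1 singular points of the blow-up system can be nodes). -/

import Mathlib

open Polynomial Finset

lemma derivB {m : ℕ} (a : ℝ) (u : Fin m → ℝ) (k : Fin m) :
    (Polynomial.derivative (C a * ∏ i, (X - C (u i)))).eval (u k)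
      = a * ∏ j ∈ univ.erase k, (u k - u j) := by
  rw [← Finset.mul_prod_erase univ _ (mem_univ k)]
  rw [derivative_mul, derivative_C, zero_mul, zero_add, derivative_mul, derivative_sub,
    derivative_X, derivative_C, sub_zero, one_mul]
  simp [eval_prod]

lemma lagrangeC {m : ℕ} (u : Fin (m+1) → ℝ) (hu : Function.Injective u)
    (g : ℝ[X]) (hg : g.degree < (m+1 : ℕ)) :
    g.coeff m = ∑ i, g.eval (u i) * (∏ j ∈ univ.erase i, (u i - u j))⁻¹ := by
  have hinj : Set.InjOn u (univ : Finset (Fin (m+1))) := fun x _ y _ h => hu h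
  have hcard : (#(univ : Finset (Fin (m+1))) : WithBot ℕ) = ((m+1 : ℕ) : WithBot ℕ) := by
    simp
  have := Lagrange.eq_interpolate hinj (by rw [hcard]; exact hg)
  conv_lhs => rw [this]
  rw [Lagrange.interpolate_apply, finset_sum_coeff]
  refine Finset.sum_congr rfl fun i _ => ?_
  rw [coeff_C_mul]
  congr 1
  unfold Lagrange.basis Lagrange.basisDivisor
  rw [Finset.prod_mul_distrib, ← map_prod, coeff_C_mul]
  have hdeg : (∏ j ∈ univ.erase i, (X - C (u j))).natDegree = m := by
    rw [natDegree_prod_of_monic _ _ fun j _ => monic_X_sub_C _]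
    simp [Finset.card_erase_of_mem]
  have hone := (monic_prod_of_monic (univ.erase i) (fun j => X - C (u j))
    fun j _ => monic_X_sub_C _).coeff_natDegree
  rw [hdeg] at hone
  rw [hone, mul_one, ← Finset.prod_inv_distrib]

lemma lemA {m : ℕ} (f : ℝ[X]) (hf0 : f ≠ 0) (hdeg : f.natDegree ≤ m+1)
    (u : Fin (m+1) → ℝ) (hu : Function.Injective u) (hr : ∀ i, f.eval (u i) = 0) :
    f.natDegree = m+1 ∧ f = C f.leadingCoeff * ∏ i, (X - C (u i)) := by
  classical
  set M : Multiset ℝ := Multiset.map u univ.val with hM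
  have hnd : M.Nodup := Multiset.Nodup.map hu univ.nodup
  have hle : M ≤ f.roots := by
    refine Multiset.le_iff_count.mpr fun x => ?_
    by_cases hx : x ∈ M
    · rw [Multiset.count_eq_one_of_mem hnd hx]
      obtain ⟨i, _, rfl⟩ := Multiset.mem_map.mp hx
      exact Multiset.count_pos.mpr (Polynomial.mem_roots'.mpr ⟨hf0, hr i⟩)
    · simp [Multiset.count_eq_zero_of_notMem hx]
  have hcardM : Multiset.card M = m+1 := by simp [hM]
  have hcardr : Multiset.card f.roots ≤ m+1 := f.card_roots'.trans hdeg
  have hMr : M = f.roots := Multiset.eq_of_le_of_card_le hle (by rw [hcardM]; exact hcardr)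
  have hnat : f.natDegree = m+1 := le_antisymm hdeg (by rw [← hcardM, hMr]; exact f.card_roots')
  have hsplit : Splits f :=
    (Polynomial.splits_iff_card_roots).mpr (by rw [← hMr, hcardM, hnat])
  refine ⟨hnat, ?_⟩
  conv_lhs => rw [hsplit.eq_prod_roots]
  rw [← hMr, hM, Multiset.map_map, Finset.prod_eq_multiset_prod]
  rfl


/-- If F₁(u) = Qₙ(1,u) − u·Pₙ(1,u) has n+1 distinct simple real roots
u₀₁ < … < u₀_{n+1}, with Pₙ(1,u₀ᵢ) ≠ 0, it is impossible that
Pₙ(1,u₀ᵢ)·F₁'(u₀ᵢ) > 0 for every i (not all blow-up equilibria are nodes). -/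
theorem not_all_nodes (n : ℕ) (hn : 1 ≤ n) (p q : ℕ → ℝ)
    (P Q : ℝ → ℝ → ℝ)
    (hP : ∀ x y, P x y = ∑ i ∈ Finset.range (n + 1), p i * x ^ i * y ^ (n - i))
    (hQ : ∀ x y, Q x y = ∑ i ∈ Finset.range (n + 1), q i * x ^ i * y ^ (n - i))
    (F₁ : ℝ → ℝ) (hF₁ : ∀ u, F₁ u = Q 1 u - u * P 1 u)
    (u₀ : Fin (n + 1) → ℝ) (hmono : StrictMono u₀)
    (hroots : ∀ i, F₁ (u₀ i) = 0)
    (hsimple : ∀ i, deriv F₁ (u₀ i) ≠ 0)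
    (hPne : ∀ i, P 1 (u₀ i) ≠ 0) :
    ¬ (∀ i, 0 < P 1 (u₀ i) * deriv F₁ (u₀ i)) := by
  intro hall
  classical
  set Pp : ℝ[X] := ∑ i ∈ Finset.range (n+1), C (p i) * X ^ (n - i) with hPp
  set Qp : ℝ[X] := ∑ i ∈ Finset.range (n+1), C (q i) * X ^ (n - i) with hQp
  set f : ℝ[X] := Qp - X * Pp with hf
  have hPev : ∀ u, Pp.eval u = P 1 u := by
    intro u; rw [hP]; simp [hPp, eval_finset_sum]
  have hQev : ∀ u, Qp.eval u = Q 1 u := by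
    intro u; rw [hQ]; simp [hQp, eval_finset_sum]
  have hfev : ∀ u, f.eval u = F₁ u := by
    intro u; rw [hF₁, hf]; simp [hPev, hQev]
  have hF1fun : F₁ = fun u => f.eval u := funext fun u => (hfev u).symm
  have hderiv : ∀ u, deriv F₁ u = f.derivative.eval u := by
    intro u; rw [hF1fun]; exact Polynomial.deriv f
  have hf0 : f ≠ 0 := by
    intro h
    exact hsimple 0 (by rw [hderiv, h]; simp)
  have hPdeg : Pp.natDegree ≤ n := by
    refine (natDegree_sum_le _ _).trans ?_
    rw [Finset.fold_max_le]
    refine ⟨Nat.zero_le _, fun i _ => ?_⟩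
    exact (natDegree_C_mul_le _ _).trans (by simp [natDegree_X_pow, Nat.sub_le])
  have hQdeg : Qp.natDegree ≤ n := by
    refine (natDegree_sum_le _ _).trans ?_
    rw [Finset.fold_max_le]
    refine ⟨Nat.zero_le _, fun i _ => ?_⟩
    exact (natDegree_C_mul_le _ _).trans (by simp [natDegree_X_pow, Nat.sub_le])
  have hfdeg : f.natDegree ≤ n + 1 := by
    refine (natDegree_sub_le _ _).trans ?_
    simp only [max_le_iff]
    exact ⟨hQdeg.trans (Nat.le_succ n),
      (natDegree_mul_le).trans (by simp only [natDegree_X]; omega)⟩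
  have hu : Function.Injective u₀ := hmono.injective
  obtain ⟨hnat, hfact⟩ := lemA f hf0 hfdeg u₀ hu (fun i => by rw [hfev]; exact hroots i)
  set a := f.leadingCoeff with haa
  have ha : a ≠ 0 := leadingCoeff_ne_zero.mpr hf0
  set d : Fin (n+1) → ℝ := fun k => ∏ j ∈ univ.erase k, (u₀ k - u₀ j) with hd
  have hdne : ∀ k, d k ≠ 0 := fun k =>
    Finset.prod_ne_zero_iff.mpr fun j hj =>
      sub_ne_zero.mpr fun h => (Finset.mem_erase.mp hj).1 (hu h).symm
  have hderiv' : ∀ k, deriv F₁ (u₀ k) = a * d k := by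
    intro k
    rw [hderiv, hfact]
    exact derivB a u₀ k
  -- coefficient of Pp at n is p 0
  have hPcoeff : Pp.coeff n = p 0 := by
    rw [hPp, finset_sum_coeff]
    rw [Finset.sum_eq_single 0]
    · simp
    · intro i hi hine
      have hin : i ≤ n := Nat.lt_succ_iff.mp (Finset.mem_range.mp hi)
      have : n - i ≠ n := by omega
      simp only [coeff_C_mul, coeff_X_pow]
      rw [if_neg (fun h => this h.symm)]
      exact mul_zero _
    · simp
  -- leading coefficient of f is -(p 0)
  have hacoeff : a = -(p 0) := by
    have : a = f.coeff (n+1) := by rw [haa, leadingCoeff, hnat]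
    rw [this, hf]
    rw [coeff_sub, coeff_X_mul, hPcoeff,
      coeff_eq_zero_of_natDegree_lt (lt_of_le_of_lt hQdeg (Nat.lt_succ_self n)), zero_sub]
  -- Lagrange identity
  have hPdegree : Pp.degree < ((n+1 : ℕ) : WithBot ℕ) :=
    lt_of_le_of_lt degree_le_natDegree (by exact_mod_cast Nat.lt_succ_of_le hPdeg)
  have hsum := lagrangeC u₀ hu Pp hPdegree
  rw [hPcoeff] at hsum
  simp only [hPev] at hsum
  -- each summand has the sign of a
  have key : ∀ k : Fin (n+1), 0 < a * (P 1 (u₀ k) * (d k)⁻¹) := by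
    intro k
    have h1 := hall k
    rw [hderiv' k] at h1
    have heq : a * (P 1 (u₀ k) * (d k)⁻¹) = (P 1 (u₀ k) * (a * d k)) * ((d k)^2)⁻¹ := by
      field_simp [hdne k]
    rw [heq]
    have : (0:ℝ) < ((d k)^2)⁻¹ := by have h := hdne k; positivity
    exact mul_pos h1 this
  have hsumpos : 0 < ∑ k, a * (P 1 (u₀ k) * (d k)⁻¹) :=
    Finset.sum_pos (fun k _ => key k) ⟨0, Finset.mem_univ 0⟩
  rw [← Finset.mul_sum, ← hsum, hacoeff] at hsumpos
  nlinarith [sq_nonneg (p 0)]
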